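/- For any atomic proposition p, the contraction rules (from Γ, p, p ⇒ Δ infer Γ, p ⇒ Δ) and (from Γ ⇒ p, p, Δ infer Γ ⇒ p, Δ) are strongly admissible in Grz∞+cut. -/

import Mathlib

/-- Modal formulas of the Grzegorczyk logic: ⊥, atoms, →, □. -/
inductive Formula : Type
  | bot : Formula
  | atom : ℕ → Formula
  | imp : Formula → Formula → Formula
  | box : Formula → Formula
deriving DecidableEq

/-- A sequent Γ ⇒ Δ is a pair of finite multisets of formulas. -/
abbrev Sequent : Type := Multiset Formula × Multiset Formula

/-- Names of the inference rules of Grz∞ + cut (including the two kinds of initial sequents). -/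
inductive Rule : Type
  | ax | axBot | impL | impR | refl | box | cut
deriving DecidableEq

/-- □Π for a multiset Π. -/
def boxed (P : Multiset Formula) : Multiset Formula := P.map Formula.box

/-- `Inst r s p₁ p₂` : the rule `r` has a (correct) instance with conclusion `s`,
first premise `p₁` and second premise `p₂` (`none` = no such premise). -/
inductive Inst : Rule → Sequent → Option Sequent → Option Sequent → Prop
  | ax (Γ Δ : Multiset Formula) (p : ℕ) :
      Inst .ax (Formula.atom p ::ₘ Γ, Formula.atom p ::ₘ Δ) none none
  | axBot (Γ Δ : Multiset Formula) :
      Inst .axBot (Formula.bot ::ₘ Γ, Δ) none none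
  | impL (Γ Δ : Multiset Formula) (A B : Formula) :
      Inst .impL (Formula.imp A B ::ₘ Γ, Δ) (some (B ::ₘ Γ, Δ)) (some (Γ, A ::ₘ Δ))
  | impR (Γ Δ : Multiset Formula) (A B : Formula) :
      Inst .impR (Γ, Formula.imp A B ::ₘ Δ) (some (A ::ₘ Γ, B ::ₘ Δ)) none
  | refl (Γ Δ : Multiset Formula) (A : Formula) :
      Inst .refl (Formula.box A ::ₘ Γ, Δ) (some (A ::ₘ Formula.box A ::ₘ Γ, Δ)) none
  | box (Γ Δ : Multiset Formula) (A : Formula) (P : Multiset Formula) :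
      Inst .box (Γ + boxed P, Formula.box A ::ₘ Δ) (some (Γ + boxed P, A ::ₘ Δ))
        (some (boxed P, {A}))
  | cut (Γ Δ : Multiset Formula) (A : Formula) :
      Inst .cut (Γ, Δ) (some (Γ, A ::ₘ Δ)) (some (A ::ₘ Γ, Δ))

/-- A labelling of tree addresses (lists of booleans; `true` = second/right child)
by a rule name together with a sequent; `none` means the address is outside the tree. -/
abbrev Lab : Type := List Bool → Option (Rule × Sequent)

/-- The labelling of the subtree at child `i`. -/
def shift (i : Bool) (l : Lab) : Lab := fun a => l (i :: a)

/-- An ∞-proof in Grz∞ + cut: a possibly infinite tree of sequents built according to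
the rules, in which every infinite branch passes through the right premise of the
rule (□) infinitely many times. -/
structure InfProof : Type where
  lab : Lab
  root_some : (lab []).isSome
  nojunk : ∀ (a : List Bool) (i : Bool), lab a = none → lab (a ++ [i]) = none
  step : ∀ (a : List Bool) (r : Rule) (s : Sequent), lab a = some (r, s) →
      Inst r s ((lab (a ++ [false])).map Prod.snd) ((lab (a ++ [true])).map Prod.snd)
  branch : ∀ f : ℕ → Bool, (∀ n : ℕ, (lab ((List.range n).map f)).isSome) →
      ∀ N : ℕ, ∃ n : ℕ, N ≤ n ∧ f n = true ∧
        (lab ((List.range n).map f)).map Prod.fst = some Rule.box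

/-- The sequent at the root of an ∞-proof. -/
def rootSeq (π : InfProof) : Sequent := ((π.lab []).map Prod.snd).getD (0, 0)

/-- `Proves π S` : the ∞-proof `π` is an ∞-proof of the sequent `S`. -/
def Proves (π : InfProof) (S : Sequent) : Prop := ∃ r : Rule, π.lab [] = some (r, S)

/-- An ∞-proof contains no application of the cut rule (i.e. it is a proof of Grz∞). -/
def NoCut (π : InfProof) : Prop := ∀ (a : List Bool) (r : Rule) (s : Sequent),
  π.lab a = some (r, s) → r ≠ Rule.cut

/-- Membership of an address in the main fragment: no proper passage through a
right premise of (□) strictly below it. -/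
def InMain (l : Lab) (a : List Bool) : Prop :=
  (l a).isSome ∧ ∀ (b c : List Bool), a = b ++ true :: c →
    (l b).map Prod.fst = some Rule.box → c = []

/-- The local height |π| : the length of the longest branch in the main fragment. -/
noncomputable def height (l : Lab) : ℕ := sSup {n : ℕ | ∃ a : List Bool, InMain l a ∧ a.length = n}

/-- The relations ∼ₙ on ∞-proofs (presented on labellings), defined inductively:
π ∼₀ τ always; a single-node proof is ∼ₙ-related to itself; proofs ending in the same
instance of (→L), (cut), (→R), (refl) are ∼ₙ-related when their immediate subproofs are;
proofs ending in the same instance of (□) are ∼ₙ₊₁-related when the left-premise subproofs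
are ∼ₙ₊₁-related and the right-premise subproofs are ∼ₙ-related. -/
inductive Sim : ℕ → Lab → Lab → Prop
  | zero (l m : Lab) : Sim 0 l m
  | leaf (n : ℕ) (l : Lab) : height l = 0 → Sim n l l
  | bin (n : ℕ) (l m : Lab) (r : Rule) (s : Sequent) :
      (r = Rule.impL ∨ r = Rule.cut) →
      l [] = some (r, s) → m [] = some (r, s) →
      (l [false]).map Prod.snd = (m [false]).map Prod.snd →
      (l [true]).map Prod.snd = (m [true]).map Prod.snd →
      Sim n (shift false l) (shift false m) → Sim n (shift true l) (shift true m) →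
      Sim n l m
  | un (n : ℕ) (l m : Lab) (r : Rule) (s : Sequent) :
      (r = Rule.impR ∨ r = Rule.refl) →
      l [] = some (r, s) → m [] = some (r, s) →
      (l [false]).map Prod.snd = (m [false]).map Prod.snd →
      Sim n (shift false l) (shift false m) →
      Sim n l m
  | box (n : ℕ) (l m : Lab) (s : Sequent) :
      l [] = some (Rule.box, s) → m [] = some (Rule.box, s) →
      (l [false]).map Prod.snd = (m [false]).map Prod.snd →
      (l [true]).map Prod.snd = (m [true]).map Prod.snd →
      Sim (n + 1) (shift false l) (shift false m) → Sim n (shift true l) (shift true m) →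
      Sim (n + 1) l m

/-- The sets 𝒫ₙ of ∞-proofs (presented on labellings), defined inductively:
𝒫₀ is everything; single-node proofs are in every 𝒫ₙ; (→L), (→R), (refl) preserve
membership in 𝒫ₙ; a proof ending in (□) with left-premise subproof in 𝒫ₙ₊₁ and
right-premise subproof in 𝒫ₙ is in 𝒫ₙ₊₁. -/
inductive MemP : ℕ → Lab → Prop
  | zero (l : Lab) : MemP 0 l
  | leaf (n : ℕ) (l : Lab) : height l = 0 → MemP n l
  | bin (n : ℕ) (l : Lab) (s : Sequent) :
      l [] = some (Rule.impL, s) →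
      MemP n (shift false l) → MemP n (shift true l) → MemP n l
  | un (n : ℕ) (l : Lab) (r : Rule) (s : Sequent) :
      (r = Rule.impR ∨ r = Rule.refl) →
      l [] = some (r, s) → MemP n (shift false l) → MemP n l
  | box (n : ℕ) (l : Lab) (s : Sequent) :
      l [] = some (Rule.box, s) →
      MemP (n + 1) (shift false l) → MemP n (shift true l) → MemP (n + 1) l

/- The metric d(π,τ) = 2^(−sup{n : π ∼ₙ τ}), with 2^(−∞) = 0. -/
open Classical in
noncomputable def pdist (π τ : InfProof) : ℝ :=
  if ∀ n : ℕ, Sim n π.lab τ.lab then 0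
  else (2 : ℝ) ^ (-((sSup {n : ℕ | Sim n π.lab τ.lab} : ℕ) : ℤ))

/-- A mapping on ∞-proofs is nonexpansive if it preserves all relations ∼ₙ. -/
def Nonexpansive (f : InfProof → InfProof) : Prop :=
  ∀ (n : ℕ) (π τ : InfProof), Sim n π.lab τ.lab → Sim n (f π).lab (f τ).lab

/-- A mapping is adequate if it is nonexpansive, maps 𝒫₁ into 𝒫₁,
and does not increase local height. -/
def Adequate (f : InfProof → InfProof) : Prop :=
  Nonexpansive f ∧ (∀ π : InfProof, MemP 1 π.lab → MemP 1 (f π).lab) ∧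
    ∀ π : InfProof, height (f π).lab ≤ height π.lab

/-- The set 𝒫₁ of ∞-proofs whose main fragment is cut-free, as a subtype. -/
abbrev P1 : Type := {π : InfProof // MemP 1 π.lab}

/-- An A-reducing mapping: a nonexpansive map ℛ : 𝒫₁ × 𝒫₁ → 𝒫₁ such that
ℛ(π′,π″) proves Γ ⇒ Δ whenever π′ proves Γ ⇒ Δ, A and π″ proves A, Γ ⇒ Δ. -/
def Reducing (A : Formula) (R : P1 → P1 → P1) : Prop :=
  (∀ (n : ℕ) (p₁ p₂ q₁ q₂ : P1), Sim n p₁.1.lab q₁.1.lab → Sim n p₂.1.lab q₂.1.lab →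
      Sim n (R p₁ p₂).1.lab (R q₁ q₂).1.lab) ∧
  ∀ (p₁ p₂ : P1) (Γ Δ : Multiset Formula),
    Proves p₁.1 (Γ, A ::ₘ Δ) → Proves p₂.1 (A ::ₘ Γ, Δ) → Proves (R p₁ p₂).1 (Γ, Δ)

/-- A mapping is root-preserving if it maps ∞-proofs to ∞-proofs of the same sequent. -/
def RootPres (f : InfProof → InfProof) : Prop :=
  ∀ (π : InfProof) (S : Sequent), Proves π S → Proves (f π) S

/-- The uniform distance on mappings of ∞-proofs. -/
noncomputable def udist (U V : InfProof → InfProof) : ℝ :=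
  ⨆ π : InfProof, pdist (U π) (V π)

/- The immediate subproof of `π` at child `i` (junk value `π` if there is none). -/
open Classical in
noncomputable def subtree (π : InfProof) (i : Bool) : InfProof :=
  if h : ∃ τ : InfProof, τ.lab = shift i π.lab then h.choose else π

/-- `IsFOp E F` : `F` is the operator ℱ (relative to the one-step cut-elimination map
`E` = ℰ*) defined by: on proofs with cut-free main fragment it commutes with the last
rule, applying `U` at right premises of (□) and fixing single-node proofs; on other
proofs it first applies `E`. -/
def IsFOp (E : InfProof → InfProof) (F : (InfProof → InfProof) → InfProof → InfProof) : Prop :=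
  ∀ (U : InfProof → InfProof) (π : InfProof),
    (MemP 1 π.lab → height π.lab = 0 → F U π = π) ∧
    (∀ (r : Rule) (s : Sequent), MemP 1 π.lab → π.lab [] = some (r, s) →
        r ≠ Rule.box → r ≠ Rule.cut → height π.lab ≠ 0 →
        (F U π).lab [] = some (r, s) ∧
        shift false (F U π).lab = (F U (subtree π false)).lab ∧
        (r = Rule.impL → shift true (F U π).lab = (F U (subtree π true)).lab)) ∧
    (∀ s : Sequent, MemP 1 π.lab → π.lab [] = some (Rule.box, s) →
        (F U π).lab [] = some (Rule.box, s) ∧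
        shift false (F U π).lab = (F U (subtree π false)).lab ∧
        shift true (F U π).lab = (U (subtree π true)).lab) ∧
    (¬ MemP 1 π.lab → F U π = F U (E π))

/-- Membership in 𝒩ₙ : a root-preserving nonexpansive map whose image lies in 𝒫ₙ. -/
def InN (n : ℕ) (U : InfProof → InfProof) : Prop :=
  Nonexpansive U ∧ RootPres U ∧ ∀ π : InfProof, MemP n (U π).lab

/-- The finitary sequent calculus Grz_Seq (with cut allowed iff the flag is `true`). -/
inductive GrzSeq : Bool → Sequent → Prop
  | ax (c : Bool) (Γ Δ : Multiset Formula) (A : Formula) :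
      GrzSeq c (A ::ₘ Γ, A ::ₘ Δ)
  | bot (c : Bool) (Γ Δ : Multiset Formula) :
      GrzSeq c (Formula.bot ::ₘ Γ, Δ)
  | impL (c : Bool) (Γ Δ : Multiset Formula) (A B : Formula) :
      GrzSeq c (B ::ₘ Γ, Δ) → GrzSeq c (Γ, A ::ₘ Δ) →
      GrzSeq c (Formula.imp A B ::ₘ Γ, Δ)
  | impR (c : Bool) (Γ Δ : Multiset Formula) (A B : Formula) :
      GrzSeq c (A ::ₘ Γ, B ::ₘ Δ) → GrzSeq c (Γ, Formula.imp A B ::ₘ Δ)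
  | refl (c : Bool) (Γ Δ : Multiset Formula) (B : Formula) :
      GrzSeq c (B ::ₘ Formula.box B ::ₘ Γ, Δ) → GrzSeq c (Formula.box B ::ₘ Γ, Δ)
  | grz (c : Bool) (Γ Δ : Multiset Formula) (A : Formula) (P : Multiset Formula) :
      GrzSeq c (Formula.box (Formula.imp A (Formula.box A)) ::ₘ boxed P, {A}) →
      GrzSeq c (Γ + boxed P, Formula.box A ::ₘ Δ)
  | cut (Γ Δ : Multiset Formula) (A : Formula) :
      GrzSeq true (Γ, A ::ₘ Δ) → GrzSeq true (A ::ₘ Γ, Δ) → GrzSeq true (Γ, Δ)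


/-!
Since `p` is atomic, a rule instance whose conclusion contains `p` twice on one side uses neither
copy as principal formula, except in an axiom, where the other copy remains. So deleting one copy
of `p` from every sequent of the main fragment again yields instances of the same rules; the right
premise `□Π ⇒ A` of (□) does not mention the side formulas and stays as it is, so the subproofs
above right premises of (□) are left untouched. This relabelling keeps the shape of the tree and
all rule names, hence every relation `∼ₙ`, membership in every `𝒫ₙ` and the local height.
-/

/-- Unlike `InMain`, this also excludes the roots of the right premises of (□). -/
def AvoidsBoxRight (l : Lab) (a : List Bool) : Prop :=
  ∀ b c, a = b ++ true :: c → (l b).map Prod.fst ≠ some Rule.box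

namespace AvoidsBoxRight

variable {l : Lab}

lemma nil (l : Lab) : AvoidsBoxRight l [] := by
  intro b c h
  simp at h

lemma cons_false_iff {a : List Bool} :
    AvoidsBoxRight l (false :: a) ↔ AvoidsBoxRight (shift false l) a := by
  constructor
  · intro h b c hbc
    exact h (false :: b) c (by rw [hbc]; rfl)
  · rintro h (_ | ⟨j, b⟩) c hbc
    · simp at hbc
    · obtain ⟨rfl, hab⟩ := List.cons_eq_cons.mp hbc
      exact h b c hab

lemma cons_true_iff {a : List Bool} :
    AvoidsBoxRight l (true :: a) ↔
      (l []).map Prod.fst ≠ some Rule.box ∧ AvoidsBoxRight (shift true l) a := by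
  constructor
  · intro h
    exact ⟨h [] a rfl, fun b c hbc => h (true :: b) c (by rw [hbc]; rfl)⟩
  · rintro ⟨hroot, h⟩ (_ | ⟨j, b⟩) c hbc
    · exact hroot
    · obtain ⟨rfl, hab⟩ := List.cons_eq_cons.mp hbc
      exact h b c hab

lemma append_singleton_iff {a : List Bool} {i : Bool} :
    AvoidsBoxRight l (a ++ [i]) ↔
      AvoidsBoxRight l a ∧ (i = true → (l a).map Prod.fst ≠ some Rule.box) := by
  constructor
  · intro h
    exact ⟨fun b c hbc => h b (c ++ [i]) (by simp [hbc]), by rintro rfl; exact h a [] rfl⟩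
  · rintro ⟨ha, hi⟩ b c hbc
    rcases List.eq_nil_or_concat c with rfl | ⟨c, j, rfl⟩
    · obtain ⟨rfl, hi'⟩ := List.append_inj' hbc rfl
      exact hi (List.singleton_inj.mp hi')
    · have hbc' : a ++ [i] = (b ++ true :: c) ++ [j] := by simpa using hbc
      exact ha b c (List.append_inj' hbc' rfl).1

lemma singleton_false (l : Lab) : AvoidsBoxRight l [false] :=
  cons_false_iff.mpr (nil _)

lemma singleton_true (h : (l []).map Prod.fst ≠ some Rule.box) : AvoidsBoxRight l [true] :=
  cons_true_iff.mpr ⟨h, nil _⟩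

lemma not_singleton_true (h : (l []).map Prod.fst = some Rule.box) :
    ¬ AvoidsBoxRight l [true] :=
  fun hc => (cons_true_iff.mp hc).1 h

end AvoidsBoxRight

open Classical in
noncomputable def relabel (g : Sequent → Sequent) (l : Lab) : Lab :=
  fun a => if AvoidsBoxRight l a then (l a).map (fun rs => (rs.1, g rs.2)) else l a

section Relabel

open Classical

variable {g : Sequent → Sequent} {l : Lab} {a : List Bool}

lemma relabel_of_avoidsBoxRight (h : AvoidsBoxRight l a) :
    relabel g l a = (l a).map (fun rs => (rs.1, g rs.2)) := if_pos h

lemma relabel_of_not_avoidsBoxRight (h : ¬ AvoidsBoxRight l a) : relabel g l a = l a := if_neg h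

lemma map_fst_relabel : (relabel g l a).map Prod.fst = (l a).map Prod.fst := by
  unfold relabel
  split <;> cases l a <;> rfl

lemma relabel_eq_none_iff : relabel g l a = none ↔ l a = none := by
  unfold relabel
  split <;> cases l a <;> simp

lemma isSome_relabel : (relabel g l a).isSome = (l a).isSome := by
  rw [Bool.eq_iff_iff, Option.isSome_iff_ne_none, Option.isSome_iff_ne_none,
    Ne, Ne, relabel_eq_none_iff]

lemma map_snd_relabel_of_avoidsBoxRight (h : AvoidsBoxRight l a) :
    (relabel g l a).map Prod.snd = ((l a).map Prod.snd).map g := by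
  rw [relabel_of_avoidsBoxRight h]
  cases l a <;> rfl

lemma relabel_nil {r : Rule} {s : Sequent} (h : l [] = some (r, s)) :
    relabel g l [] = some (r, g s) := by
  rw [relabel_of_avoidsBoxRight (.nil l), h]
  rfl

lemma map_snd_relabel_false :
    (relabel g l [false]).map Prod.snd = ((l [false]).map Prod.snd).map g :=
  map_snd_relabel_of_avoidsBoxRight (.singleton_false l)

lemma map_snd_relabel_true_of_ne (h : (l []).map Prod.fst ≠ some Rule.box) :
    (relabel g l [true]).map Prod.snd = ((l [true]).map Prod.snd).map g :=
  map_snd_relabel_of_avoidsBoxRight (.singleton_true h)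

lemma relabel_true_of_eq (h : (l []).map Prod.fst = some Rule.box) :
    relabel g l [true] = l [true] :=
  relabel_of_not_avoidsBoxRight (AvoidsBoxRight.not_singleton_true h)

lemma shift_false_relabel : shift false (relabel g l) = relabel g (shift false l) := by
  funext a
  exact if_congr AvoidsBoxRight.cons_false_iff rfl rfl

lemma shift_true_relabel_of_eq (h : (l []).map Prod.fst = some Rule.box) :
    shift true (relabel g l) = shift true l := by
  funext a
  exact relabel_of_not_avoidsBoxRight fun hc => (AvoidsBoxRight.cons_true_iff.mp hc).1 h

lemma shift_true_relabel_of_ne (h : (l []).map Prod.fst ≠ some Rule.box) :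
    shift true (relabel g l) = relabel g (shift true l) := by
  funext a
  exact if_congr (by simp [AvoidsBoxRight.cons_true_iff, h]) rfl rfl

lemma height_relabel : height (relabel g l) = height l := by
  simp only [height, InMain, isSome_relabel, map_fst_relabel]

lemma Sim.relabel {n : ℕ} {l m : Lab} (h : Sim n l m) : Sim n (relabel g l) (relabel g m) := by
  induction h with
  | zero l m => exact .zero _ _
  | leaf n l h => exact .leaf n _ (height_relabel.trans h)
  | bin n l m r s hr hl hm hf ht _ _ ihf iht =>
    have hbox : some r ≠ some Rule.box := by rcases hr with rfl | rfl <;> simp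
    have hlb : (l []).map Prod.fst ≠ some Rule.box := by simpa [hl] using hbox
    have hmb : (m []).map Prod.fst ≠ some Rule.box := by simpa [hm] using hbox
    refine .bin n _ _ r (g s) hr (relabel_nil hl) (relabel_nil hm) ?_ ?_ ?_ ?_
    · rw [map_snd_relabel_false, map_snd_relabel_false, hf]
    · rw [map_snd_relabel_true_of_ne hlb, map_snd_relabel_true_of_ne hmb, ht]
    · rwa [shift_false_relabel, shift_false_relabel]
    · rwa [shift_true_relabel_of_ne hlb, shift_true_relabel_of_ne hmb]
  | un n l m r s hr hl hm hf _ ihf =>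
    refine .un n _ _ r (g s) hr (relabel_nil hl) (relabel_nil hm) ?_ ?_
    · rw [map_snd_relabel_false, map_snd_relabel_false, hf]
    · rwa [shift_false_relabel, shift_false_relabel]
  | box n l m s hl hm hf ht _ hst ihf _ =>
    have hlb : (l []).map Prod.fst = some Rule.box := by rw [hl]; rfl
    have hmb : (m []).map Prod.fst = some Rule.box := by rw [hm]; rfl
    refine .box n _ _ (g s) (relabel_nil hl) (relabel_nil hm) ?_ ?_ ?_ ?_
    · rw [map_snd_relabel_false, map_snd_relabel_false, hf]
    · rw [relabel_true_of_eq hlb, relabel_true_of_eq hmb, ht]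
    · rwa [shift_false_relabel, shift_false_relabel]
    · rwa [shift_true_relabel_of_eq hlb, shift_true_relabel_of_eq hmb]

lemma MemP.relabel {n : ℕ} (h : MemP n l) : MemP n (relabel g l) := by
  induction h with
  | zero l => exact .zero _
  | leaf n l h => exact .leaf n _ (height_relabel.trans h)
  | bin n l s hl _ _ ihf iht =>
    have hlb : (l []).map Prod.fst ≠ some Rule.box := by simp [hl]
    refine .bin n _ (g s) (relabel_nil hl) ?_ ?_
    · rwa [shift_false_relabel]
    · rwa [shift_true_relabel_of_ne hlb]
  | un n l r s hr hl _ ihf =>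
    exact .un n _ r (g s) hr (relabel_nil hl) (by rwa [shift_false_relabel])
  | box n l s hl _ ht ihf _ =>
    have hlb : (l []).map Prod.fst = some Rule.box := by rw [hl]; rfl
    refine .box n _ (g s) (relabel_nil hl) ?_ ?_
    · rwa [shift_false_relabel]
    · rwa [shift_true_relabel_of_eq hlb]

end Relabel

lemma Sim.lab_nil_eq {n : ℕ} {l m : Lab} (h : Sim (n + 1) l m) : l [] = m [] := by
  cases h with
  | leaf => rfl
  | bin _ _ _ _ _ _ hl hm => rw [hl, hm]
  | un _ _ _ _ _ _ hl hm => rw [hl, hm]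
  | box _ _ _ _ hl hm => rw [hl, hm]

lemma rootSeq_eq_of_sim {n : ℕ} {π τ : InfProof} (h : Sim (n + 1) π.lab τ.lab) :
    rootSeq π = rootSeq τ := by
  simp only [rootSeq, h.lab_nil_eq]

lemma rootSeq_eq {π : InfProof} {r : Rule} {s : Sequent} (h : π.lab [] = some (r, s)) :
    rootSeq π = s := by
  simp [rootSeq, h]

structure Relabelling where
  toFun : Sequent → Sequent
  Inv : Sequent → Prop
  inst_map : ∀ {r s o₁ o₂}, Inst r s o₁ o₂ → Inv s →
    Inst r (toFun s) (o₁.map toFun) (if r = Rule.box then o₂ else o₂.map toFun)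
  inv_left : ∀ {r s s₁ o₂}, Inst r s (some s₁) o₂ → Inv s → Inv s₁
  inv_right : ∀ {r s o₁ s₂}, Inst r s o₁ (some s₂) → r ≠ Rule.box → Inv s → Inv s₂

namespace Relabelling

variable (R : Relabelling)

lemma inv_of_avoidsBoxRight {π : InfProof} (h₀ : R.Inv (rootSeq π)) :
    ∀ (a : List Bool), AvoidsBoxRight π.lab a →
      ∀ r s, π.lab a = some (r, s) → R.Inv s := by
  intro a
  induction a using List.reverseRecOn with
  | nil => exact fun _ r s h => rootSeq_eq h ▸ h₀
  | append_singleton a i ih =>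
    intro hav r s h
    obtain ⟨hava, hi⟩ := AvoidsBoxRight.append_singleton_iff.mp hav
    have hsome : π.lab a ≠ none := fun hn => by simp [π.nojunk a i hn] at h
    obtain ⟨⟨r₀, s₀⟩, ha⟩ := Option.ne_none_iff_exists'.mp hsome
    have hstep := π.step a r₀ s₀ ha
    have hinv := ih hava r₀ s₀ ha
    cases i with
    | false =>
      rw [h] at hstep
      exact R.inv_left hstep hinv
    | true =>
      rw [h] at hstep
      exact R.inv_right hstep (fun hr => hi rfl (by simp [ha, hr])) hinv

lemma step_relabel {π : InfProof} (h₀ : R.Inv (rootSeq π)) (a : List Bool) (r : Rule)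
    (s : Sequent) (h : relabel R.toFun π.lab a = some (r, s)) :
    Inst r s ((relabel R.toFun π.lab (a ++ [false])).map Prod.snd)
      ((relabel R.toFun π.lab (a ++ [true])).map Prod.snd) := by
  by_cases hav : AvoidsBoxRight π.lab a
  · rw [relabel_of_avoidsBoxRight hav] at h
    obtain ⟨⟨r, s⟩, ha, hrs⟩ := Option.map_eq_some_iff.mp h
    cases hrs
    have H := R.inst_map (π.step a r s ha) (R.inv_of_avoidsBoxRight h₀ a hav r s ha)
    rw [map_snd_relabel_of_avoidsBoxRight
      (AvoidsBoxRight.append_singleton_iff.mpr ⟨hav, by simp⟩)]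
    by_cases hr : r = Rule.box
    · rw [if_pos hr] at H
      rwa [relabel_of_not_avoidsBoxRight fun hc =>
        (AvoidsBoxRight.append_singleton_iff.mp hc).2 rfl (by simp [ha, hr])]
    · rw [if_neg hr] at H
      rwa [map_snd_relabel_of_avoidsBoxRight (AvoidsBoxRight.append_singleton_iff.mpr
        ⟨hav, fun _ => by simpa [ha] using hr⟩)]
  · have hchild (i : Bool) : ¬ AvoidsBoxRight π.lab (a ++ [i]) :=
      fun hc => hav (AvoidsBoxRight.append_singleton_iff.mp hc).1
    rw [relabel_of_not_avoidsBoxRight hav] at h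
    rw [relabel_of_not_avoidsBoxRight (hchild false), relabel_of_not_avoidsBoxRight (hchild true)]
    exact π.step a r s h

noncomputable def apply (π : InfProof) (h₀ : R.Inv (rootSeq π)) : InfProof where
  lab := relabel R.toFun π.lab
  root_some := isSome_relabel.trans π.root_some
  nojunk a i h := relabel_eq_none_iff.mpr (π.nojunk a i (relabel_eq_none_iff.mp h))
  step := R.step_relabel h₀
  branch f hf N := by
    simpa only [map_fst_relabel] using π.branch f (fun n => isSome_relabel ▸ hf n) N

open Classical in
noncomputable def map (π : InfProof) : InfProof :=
  if h : R.Inv (rootSeq π) then R.apply π h else π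

open Classical in
lemma map_lab (π : InfProof) :
    (R.map π).lab = if R.Inv (rootSeq π) then relabel R.toFun π.lab else π.lab := by
  unfold map
  split <;> rfl

lemma adequate_map : Adequate R.map := by
  refine ⟨?_, fun π h => ?_, fun π => ?_⟩
  · rintro (_ | n) π τ hsim
    · exact .zero _ _
    · rw [map_lab, map_lab, ← rootSeq_eq_of_sim hsim]
      split
      · exact hsim.relabel
      · exact hsim
  · rw [map_lab]
    split
    · exact h.relabel
    · exact h
  · rw [map_lab]
    split
    · exact height_relabel.le
    · exact le_rfl

lemma proves_map {π : InfProof} {S : Sequent} (hS : R.Inv S) (h : Proves π S) :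
    Proves (R.map π) (R.toFun S) := by
  obtain ⟨r, hr⟩ := h
  refine ⟨r, ?_⟩
  rw [map_lab, if_pos (rootSeq_eq hr ▸ hS), relabel_nil hr]

end Relabelling

lemma Multiset.mem_of_two_le_count_cons {α : Type*} [DecidableEq α] {a b : α}
    {s : Multiset α} (h : 2 ≤ (b ::ₘ s).count a) : a ∈ s := by
  refine Multiset.count_pos.mp ?_
  rw [Multiset.count_cons] at h
  split at h <;> omega

def eraseLeft (A : Formula) (S : Sequent) : Sequent := (S.1.erase A, S.2)

def eraseRight (A : Formula) (S : Sequent) : Sequent := (S.1, S.2.erase A)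

section Atoms

variable {p : ℕ} {r : Rule} {s : Sequent}

lemma Inst.count_atom_le_left_premise {s₁ : Sequent} {o₂ : Option Sequent}
    (h : Inst r s (some s₁) o₂) :
    s.1.count (.atom p) ≤ s₁.1.count (.atom p) ∧ s.2.count (.atom p) ≤ s₁.2.count (.atom p) := by
  cases h <;> simp [Multiset.count_cons]

lemma Inst.count_atom_le_right_premise {o₁ : Option Sequent} {s₂ : Sequent}
    (h : Inst r s o₁ (some s₂)) (hr : r ≠ Rule.box) :
    s.1.count (.atom p) ≤ s₂.1.count (.atom p) ∧ s.2.count (.atom p) ≤ s₂.2.count (.atom p) := by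
  cases h <;> simp_all [Multiset.count_cons]

lemma Inst.eraseLeft_atom {o₁ o₂ : Option Sequent} (h : Inst r s o₁ o₂)
    (hs : 2 ≤ s.1.count (.atom p)) :
    Inst r (eraseLeft (.atom p) s) (o₁.map (eraseLeft (.atom p)))
      (if r = Rule.box then o₂ else o₂.map (eraseLeft (.atom p))) := by
  cases h with
  | ax Γ Δ q =>
    have hp := Multiset.mem_of_two_le_count_cons hs
    simpa [eraseLeft, Multiset.erase_cons_tail_of_mem hp] using Inst.ax _ _ q
  | axBot Γ Δ =>
    have hp := Multiset.mem_of_two_le_count_cons hs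
    simpa [eraseLeft, Multiset.erase_cons_tail_of_mem hp] using Inst.axBot _ _
  | impL Γ Δ A B =>
    have hp := Multiset.mem_of_two_le_count_cons hs
    simpa [eraseLeft, Multiset.erase_cons_tail_of_mem hp] using Inst.impL _ _ A B
  | impR Γ Δ A B =>
    have hp : Formula.atom p ∈ Γ := Multiset.count_pos.mp (zero_lt_two.trans_le hs)
    simpa [eraseLeft, Multiset.erase_cons_tail_of_mem hp] using Inst.impR _ _ A B
  | refl Γ Δ A =>
    have hp := Multiset.mem_of_two_le_count_cons hs
    simpa [eraseLeft, Multiset.erase_cons_tail_of_mem, hp] using Inst.refl _ _ A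
  | box Γ Δ A P =>
    have hp : Formula.atom p ∈ Γ := Multiset.count_pos.mp (by simp [boxed] at hs; omega)
    simpa [eraseLeft, Multiset.erase_add_left_pos _ hp] using Inst.box _ _ A P
  | cut Γ Δ A =>
    have hp : Formula.atom p ∈ Γ := Multiset.count_pos.mp (zero_lt_two.trans_le hs)
    simpa [eraseLeft, Multiset.erase_cons_tail_of_mem hp] using Inst.cut _ _ A

lemma Inst.eraseRight_atom {o₁ o₂ : Option Sequent} (h : Inst r s o₁ o₂)
    (hs : 2 ≤ s.2.count (.atom p)) :
    Inst r (eraseRight (.atom p) s) (o₁.map (eraseRight (.atom p)))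
      (if r = Rule.box then o₂ else o₂.map (eraseRight (.atom p))) := by
  cases h with
  | ax Γ Δ q =>
    have hp := Multiset.mem_of_two_le_count_cons hs
    simpa [eraseRight, Multiset.erase_cons_tail_of_mem hp] using Inst.ax _ _ q
  | axBot Γ Δ => simpa [eraseRight] using Inst.axBot _ _
  | impL Γ Δ A B =>
    have hp : Formula.atom p ∈ Δ := Multiset.count_pos.mp (zero_lt_two.trans_le hs)
    simpa [eraseRight, Multiset.erase_cons_tail_of_mem hp] using Inst.impL _ _ A B
  | impR Γ Δ A B =>
    have hp := Multiset.mem_of_two_le_count_cons hs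
    simpa [eraseRight, Multiset.erase_cons_tail_of_mem hp] using Inst.impR _ _ A B
  | refl Γ Δ A => simpa [eraseRight] using Inst.refl _ _ A
  | box Γ Δ A P =>
    have hp := Multiset.mem_of_two_le_count_cons hs
    simpa [eraseRight, Multiset.erase_cons_tail_of_mem hp] using Inst.box _ _ A P
  | cut Γ Δ A =>
    have hp : Formula.atom p ∈ Δ := Multiset.count_pos.mp (zero_lt_two.trans_le hs)
    simpa [eraseRight, Multiset.erase_cons_tail_of_mem hp] using Inst.cut _ _ A

end Atoms

def atomContractionLeft (p : ℕ) : Relabelling where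
  toFun := eraseLeft (.atom p)
  Inv S := 2 ≤ S.1.count (.atom p)
  inst_map := Inst.eraseLeft_atom
  inv_left h hs := hs.trans h.count_atom_le_left_premise.1
  inv_right h hr hs := hs.trans (h.count_atom_le_right_premise hr).1

def atomContractionRight (p : ℕ) : Relabelling where
  toFun := eraseRight (.atom p)
  Inv S := 2 ≤ S.2.count (.atom p)
  inst_map := Inst.eraseRight_atom
  inv_left h hs := hs.trans h.count_atom_le_left_premise.2
  inv_right h hr hs := hs.trans (h.count_atom_le_right_premise hr).2

/-- atomic contraction (left and right) is strongly admissible in Grz∞ + cut. -/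
theorem contraction_strongly_admissible (p : ℕ) :
    (∃ f : InfProof → InfProof, Adequate f ∧
      ∀ (π : InfProof) (Γ Δ : Multiset Formula),
        Proves π (Formula.atom p ::ₘ Formula.atom p ::ₘ Γ, Δ) →
        Proves (f π) (Formula.atom p ::ₘ Γ, Δ)) ∧
    (∃ f : InfProof → InfProof, Adequate f ∧
      ∀ (π : InfProof) (Γ Δ : Multiset Formula),
        Proves π (Γ, Formula.atom p ::ₘ Formula.atom p ::ₘ Δ) →
        Proves (f π) (Γ, Formula.atom p ::ₘ Δ)) := by
  refine ⟨⟨(atomContractionLeft p).map, (atomContractionLeft p).adequate_map, fun π Γ Δ h => ?_⟩,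
    ⟨(atomContractionRight p).map, (atomContractionRight p).adequate_map, fun π Γ Δ h => ?_⟩⟩
  · simpa [atomContractionLeft, eraseLeft] using
      (atomContractionLeft p).proves_map (by simp [atomContractionLeft]) h
  · simpa [atomContractionRight, eraseRight] using
      (atomContractionRight p).proves_map (by simp [atomContractionRight]) h
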